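/- Let m, n ≥ 0 with m ≠ n, and let N = m + n. Let U = span{e₁,…,e_m} and W = span{e_{m+1},…,e_N} be the standard coordinate subspaces of ℂᴺ. For every chain of subspaces 0 = W₀ ⊆ W₁ ⊆ ⋯ ⊆ W_k = ℂᴺ, the set {g ∈ GL(N,ℂ) : det(g) = 1, g(U) = U, g(W) = W, and g(W_j) = W_j for all j} is a connected subset of the space of N×N complex matrices. (In other words, for m ≠ n the subgroup S(GL(m)×GL(n)) ⊂ SL(m+n) is parabolically connected.) -/

import Mathlib

/-- The coordinate subspace of `ℂ^{m+n}` spanned by the first `m` standard basis vectors. -/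
noncomputable def stdU (m n : ℕ) : Submodule ℂ (Fin (m + n) → ℂ) :=
  Submodule.span ℂ (Set.range fun i : Fin m => (Pi.single (Fin.castAdd n i) 1 : Fin (m + n) → ℂ))

/-- The coordinate subspace of `ℂ^{m+n}` spanned by the last `n` standard basis vectors. -/
noncomputable def stdW (m n : ℕ) : Submodule ℂ (Fin (m + n) → ℂ) :=
  Submodule.span ℂ (Set.range fun i : Fin n => (Pi.single (Fin.natAdd m i) 1 : Fin (m + n) → ℂ))

/-!
Let `A` be the algebra of matrices preserving `U`, `W` and every `W_j`. An invertible matrix that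
preserves a subspace maps it onto itself, so the set in question is `A ∩ SL(N)`. The units of `A`
are path connected: the complex line through `g` and `1` lies in `A` and meets `det = 0` in
finitely many points. A rank-one `e ∈ A` with `det (1 + t e) = 1 + t` then retracts the units of
`A` onto `A ∩ SL(N)` via `g ↦ g (1 + (det g⁻¹ - 1) e)`.

Such an `e = φ(·) v` exists once some `v ∉ T` is such that each of the subspaces contains `v` or
lies in `T`. If no such pair exists, then `U ∩ W_{j+1} ⊆ W + W_j` and `W ∩ W_{j+1} ⊆ U + W_j` at
every step of the flag, which keeps `dim (U ∩ W_j) - dim (W ∩ W_j)` constant along it; comparing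
`j = 0` with `j = k` gives `m = n`.
-/

open Module Submodule Matrix Polynomial

section Flag

variable {K E : Type*} [Field K] [AddCommGroup E] [Module K E]

theorem Submodule.finrank_inf_add_finrank_inf_eq_of_inf_le_sup [FiniteDimensional K E]
    {U W P Q : Submodule K E} (hPQ : P ≤ Q) (hU : U ⊓ Q ≤ W ⊔ P) (hW : W ⊓ Q ≤ U ⊔ P) :
    finrank K ↥(U ⊓ Q) + finrank K ↥(W ⊓ P) = finrank K ↥(W ⊓ Q) + finrank K ↥(U ⊓ P) := by
  have hle : ∀ {A B : Submodule K E}, A ⊓ Q ≤ B ⊔ P → A ⊓ Q ⊔ P ≤ P ⊔ B ⊓ Q := fun {_ B} hAB =>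
    sup_le ((le_inf hAB inf_le_right).trans_eq (by rw [sup_comm, sup_inf_assoc_of_le B hPQ]))
      le_sup_left
  have hsup : U ⊓ Q ⊔ P = W ⊓ Q ⊔ P :=
    le_antisymm ((hle hU).trans_eq (sup_comm _ _)) ((hle hW).trans_eq (sup_comm _ _))
  have hU' := finrank_sup_add_finrank_inf_eq (U ⊓ Q) P
  have hW' := finrank_sup_add_finrank_inf_eq (W ⊓ Q) P
  rw [inf_assoc, inf_eq_right.mpr hPQ] at hU' hW'
  rw [hsup] at hU'
  omega

variable {U W : Submodule K E} {k : ℕ} {F : Fin (k + 1) → Submodule K E}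

theorem finrank_eq_of_forall_inf_le_sup [FiniteDimensional K E] (hF : Monotone F) (h0 : F 0 = ⊥)
    (hlast : F (Fin.last k) = ⊤) (hU : ∀ i : Fin k, U ⊓ F i.succ ≤ W ⊔ F i.castSucc)
    (hW : ∀ i : Fin k, W ⊓ F i.succ ≤ U ⊔ F i.castSucc) : finrank K U = finrank K W := by
  have key : ∀ j, finrank K ↥(U ⊓ F j) = finrank K ↥(W ⊓ F j) := by
    intro j
    induction j using Fin.induction with
    | zero => rw [h0, inf_bot_eq, inf_bot_eq]
    | succ i ih =>
      have := finrank_inf_add_finrank_inf_eq_of_inf_le_sup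
        (hF (Fin.castSucc_le_succ i)) (hU i) (hW i)
      omega
  have := key (Fin.last k)
  rwa [hlast, inf_top_eq, inf_top_eq] at this

theorem exists_separating_of_not_inf_le_sup (hF : Monotone F) {i : Fin k}
    (h : ¬ U ⊓ F i.succ ≤ W ⊔ F i.castSucc) :
    ∃ v ∈ U, ∃ T : Submodule K E, v ∉ T ∧ W ≤ T ∧ ∀ j, v ∈ F j ∨ F j ≤ T := by
  obtain ⟨v, ⟨hvU, hvF⟩, hvT⟩ := SetLike.not_le_iff_exists.mp h
  refine ⟨v, hvU, W ⊔ F i.castSucc, hvT, le_sup_left, fun j => ?_⟩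
  rcases le_or_gt j i.castSucc with hj | hj
  · exact Or.inr (le_sup_of_le_right (hF hj))
  · exact Or.inl (hF (Fin.castSucc_lt_iff_succ_le.mp hj) hvF)

theorem exists_separating_of_finrank_ne [FiniteDimensional K E] (hUW : finrank K U ≠ finrank K W)
    (hF : Monotone F) (h0 : F 0 = ⊥) (hlast : F (Fin.last k) = ⊤) :
    ∃ (v : E) (T : Submodule K E), v ∉ T ∧
      ∀ p ∈ insert U (insert W (Set.range F)), v ∈ p ∨ p ≤ T := by
  by_contra hcon
  refine hUW (finrank_eq_of_forall_inf_le_sup hF h0 hlast (fun i => ?_) (fun i => ?_)) <;>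
    by_contra h <;> obtain ⟨v, hv, T, hvT, hT, hFT⟩ := exists_separating_of_not_inf_le_sup hF h
  · exact hcon ⟨v, T, hvT, by simpa [hv, hT] using hFT⟩
  · exact hcon ⟨v, T, hvT, by simpa [hv, hT] using hFT⟩

end Flag

section StabilizerSubalgebra

variable {K : Type*} [Field K] {n : Type*} [Fintype n] [DecidableEq n]

def Matrix.stabilizerSubalgebra (𝒲 : Set (Submodule K (n → K))) : Subalgebra K (Matrix n n K) where
  carrier := {g | ∀ p ∈ 𝒲, ∀ x ∈ p, g *ᵥ x ∈ p}
  mul_mem' hg hh p hp x hx := by rw [← mulVec_mulVec]; exact hg p hp _ (hh p hp x hx)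
  add_mem' hg hh p hp x hx := by rw [add_mulVec]; exact p.add_mem (hg p hp x hx) (hh p hp x hx)
  algebraMap_mem' r p _ x hx := by
    rw [Algebra.algebraMap_eq_smul_one, smul_mulVec, one_mulVec]
    exact p.smul_mem r hx

variable {𝒲 : Set (Submodule K (n → K))} {g : Matrix n n K}

theorem Matrix.mem_stabilizerSubalgebra :
    g ∈ stabilizerSubalgebra 𝒲 ↔ ∀ p ∈ 𝒲, ∀ x ∈ p, g *ᵥ x ∈ p :=
  Iff.rfl

theorem Matrix.map_toLin'_eq_iff (hg : IsUnit g.det) (p : Submodule K (n → K)) :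
    p.map (toLin' g) = p ↔ ∀ x ∈ p, g *ᵥ x ∈ p := by
  have hinj : Function.Injective (toLin' g) :=
    mulVec_injective_iff_isUnit.2 ((isUnit_iff_isUnit_det g).2 hg)
  refine ⟨fun h x hx => h ▸ mem_map_of_mem hx, fun h => ?_⟩
  refine eq_of_le_of_finrank_eq (map_le_iff_le_comap.2 h) ?_
  exact (p.equivMapOfInjective _ hinj).finrank_eq.symm

theorem Matrix.mem_stabilizerSubalgebra_iff_map_eq (hg : IsUnit g.det) :
    g ∈ stabilizerSubalgebra 𝒲 ↔ ∀ p ∈ 𝒲, p.map (toLin' g) = p := by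
  simp only [mem_stabilizerSubalgebra, map_toLin'_eq_iff hg]

theorem Matrix.exists_mem_stabilizerSubalgebra_det_one_add_smul {v : n → K}
    {T : Submodule K (n → K)} (hvT : v ∉ T) (hsep : ∀ p ∈ 𝒲, v ∈ p ∨ p ≤ T) :
    ∃ e ∈ stabilizerSubalgebra 𝒲, ∀ t : K, (1 + t • e).det = 1 + t := by
  obtain ⟨f, hfv, hTf⟩ := T.exists_le_ker_of_notMem hvT
  set φ := (f v)⁻¹ • f
  refine ⟨LinearMap.toMatrix' (φ.smulRight v), fun p hp x hx => ?_, fun t => ?_⟩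
  · rw [LinearMap.toMatrix'_mulVec, LinearMap.smulRight_apply]
    rcases hsep p hp with hv | hpT
    · exact p.smul_mem _ hv
    · simp [φ, LinearMap.mem_ker.1 (hTf (hpT hx))]
  · have : 1 + t • LinearMap.toMatrix' (φ.smulRight v) =
        LinearMap.toMatrix' (LinearMap.transvection (t • φ) v) := by
      rw [← LinearMap.toMatrix'_id, ← map_smul, ← map_add]
      congr 1
      ext x
      simp [LinearMap.transvection.apply, mul_assoc]
    rw [this, LinearMap.det_toMatrix', LinearMap.transvection.det]
    simp [φ, hfv]

end StabilizerSubalgebra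

theorem Matrix.finite_setOf_det_smul_add_eq_zero {K : Type*} [Field K] {n : Type*} [Fintype n]
    [DecidableEq n] (A : Matrix n n K) {B : Matrix n n K} (hB : B.det ≠ 0) :
    {z : K | (z • A + B).det = 0}.Finite := by
  set q := det ((X : K[X]) • A.map C + B.map C)
  have hq0 : q.coeff 0 = B.det := coeff_det_X_add_C_zero A B
  have hq : q ≠ 0 := fun h => hB (by rw [← hq0, h, coeff_zero])
  have heval : ∀ z, q.eval z = (z • A + B).det := fun z => by
    rw [← coe_evalRingHom, RingHom.map_det]
    congr 1
    ext i j
    simp [mul_comm _ z]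
  simpa [heval, IsRoot] using finite_setOfPred_isRoot hq

section Connected

variable {n : Type*} [Fintype n] [DecidableEq n] (A : Subalgebra ℂ (Matrix n n ℂ))

theorem Subalgebra.isPathConnected_setOf_det_ne_zero :
    IsPathConnected {g | g ∈ A ∧ g.det ≠ 0} := by
  refine ⟨1, ⟨A.one_mem, by simp⟩, fun g hg => ?_⟩
  let L : ℂ → Matrix n n ℂ := fun z => z • (1 - g) + g
  have hZ : {z | (L z).det = 0}.Finite := finite_setOf_det_smul_add_eq_zero (1 - g) hg.2
  have hpc : IsPathConnected (L '' {z | (L z).det = 0}ᶜ) :=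
    (hZ.countable.isPathConnected_compl_of_one_lt_rank
      (by rw [Complex.rank_real_complex]; norm_num)).image (by fun_prop)
  have hsub : L '' {z | (L z).det = 0}ᶜ ⊆ {g | g ∈ A ∧ g.det ≠ 0} := by
    rintro _ ⟨z, hz, rfl⟩
    exact ⟨A.add_mem (A.smul_mem (A.sub_mem A.one_mem hg.1) z) hg.1, hz⟩
  have h1 : 1 ∈ L '' {z | (L z).det = 0}ᶜ := ⟨1, by simp [L], by simp [L]⟩
  have hg' : g ∈ L '' {z | (L z).det = 0}ᶜ := ⟨0, by simpa [L] using hg.2, by simp [L]⟩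
  exact (hpc.joinedIn 1 h1 g hg').mono hsub

theorem Subalgebra.isPathConnected_setOf_det_eq_one {e : Matrix n n ℂ} (he : e ∈ A)
    (hdet : ∀ t : ℂ, (1 + t • e).det = 1 + t) : IsPathConnected {g | g ∈ A ∧ g.det = 1} := by
  let σ : Matrix n n ℂ → Matrix n n ℂ := fun g => g * (1 + (g.det⁻¹ - 1) • e)
  have himage : σ '' {g | g ∈ A ∧ g.det ≠ 0} = {g | g ∈ A ∧ g.det = 1} := by
    ext g
    constructor
    · rintro ⟨h, ⟨hA, hdet0⟩, rfl⟩
      refine ⟨A.mul_mem hA (A.add_mem A.one_mem (A.smul_mem he _)), ?_⟩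
      rw [det_mul, hdet, add_sub_cancel, mul_inv_cancel₀ hdet0]
    · rintro ⟨hA, h1⟩
      exact ⟨g, ⟨hA, by simp [h1]⟩, by simp [σ, h1]⟩
  rw [← himage]
  refine (A.isPathConnected_setOf_det_ne_zero).image' ?_
  have hinv : ContinuousOn (fun g : Matrix n n ℂ => g.det⁻¹) {g | g ∈ A ∧ g.det ≠ 0} :=
    (continuous_id.matrix_det.continuousOn).inv₀ fun g hg => hg.2
  fun_prop

end Connected

theorem finrank_span_range_single {K ι κ : Type*} [Field K] [DecidableEq ι] [Fintype κ]
    {f : κ → ι} (hf : Function.Injective f) :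
    finrank K (span K (Set.range fun i => (Pi.single (f i) 1 : ι → K))) = Fintype.card κ :=
  finrank_span_eq_card ((Pi.linearIndependent_single_one ι K).comp f hf)

theorem finrank_stdU (m n : ℕ) : finrank ℂ (stdU m n) = m := by
  rw [stdU, finrank_span_range_single (Fin.castAdd_injective m n), Fintype.card_fin]

theorem finrank_stdW (m n : ℕ) : finrank ℂ (stdW m n) = n := by
  rw [stdW, finrank_span_range_single (Fin.natAdd_injective n m), Fintype.card_fin]

/-- For `m ≠ n`, the subgroup `S(GL(m) × GL(n)) ⊂ SL(m+n)` (determinant-one block-diagonal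
matrices with blocks of sizes `m` and `n`) is parabolically connected: its intersection with
the stabilizer of any chain of subspaces of `ℂ^{m+n}` is connected. -/
theorem sglgl_parabolically_connected (m n : ℕ) (hmn : m ≠ n) :
    ∀ (k : ℕ) (Wc : Fin (k + 1) → Submodule ℂ (Fin (m + n) → ℂ)),
      Monotone Wc → Wc 0 = ⊥ → Wc (Fin.last k) = ⊤ →
      IsConnected {g : Matrix (Fin (m + n)) (Fin (m + n)) ℂ |
        g.det = 1 ∧
        (stdU m n).map (Matrix.toLin' g) = stdU m n ∧
        (stdW m n).map (Matrix.toLin' g) = stdW m n ∧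
        ∀ j : Fin (k + 1), (Wc j).map (Matrix.toLin' g) = Wc j} := by
  intro k Wc hmono h0 hlast
  have hUW : finrank ℂ (stdU m n) ≠ finrank ℂ (stdW m n) := by rwa [finrank_stdU, finrank_stdW]
  obtain ⟨v, T, hvT, hsep⟩ := exists_separating_of_finrank_ne hUW hmono h0 hlast
  obtain ⟨e, he, hdet⟩ := exists_mem_stabilizerSubalgebra_det_one_add_smul hvT hsep
  convert ((stabilizerSubalgebra _).isPathConnected_setOf_det_eq_one he hdet).isConnected using 1
  ext g
  refine and_comm.trans (and_congr_left fun h1 => ?_)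
  rw [mem_stabilizerSubalgebra_iff_map_eq (h1 ▸ isUnit_one)]
  simp
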